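/- Let C₁, C₂ ≥ 0 be reals and a, b ≥ 0 with a + b = 1. Then min{3C₂, 2b·C₂ + (3+b)·C₁} ≤ (3(b+3)/(3b² − 2b + 3))·(a·C₁ + b·C₂) ≤ (3/8)(5 + 3√3)·(a·C₁ + b·C₂) ≤ 3.83·(a·C₁ + b·C₂). -/

import Mathlib

/-!
Weight the two arguments of the minimum by `3b² + b` and `3(1 - b)`: both weights are
nonnegative, they sum to `3b² - 2b + 3`, and the weighted sum of the two arguments is exactly
`3(b + 3)(aC₁ + bC₂)`, so the minimum is at most their weighted average. The bound on the ratio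
`3(b + 3) / (3b² - 2b + 3)` holds for every real `b`: clearing the denominator leaves a
nonnegative multiple of `(b - (2√3 - 3))²`, so the maximum is attained at `b = 2√3 - 3`.
-/

open Real

lemma three_mul_sq_sub_two_mul_add_three_pos (b : ℝ) : 0 < 3 * b ^ 2 - 2 * b + 3 := by
  nlinarith [sq_nonneg (3 * b - 1)]

theorem min_le_div_mul_convex_combo (C₁ C₂ b : ℝ) (hb : 0 ≤ b) (hb₁ : b ≤ 1) :
    min (3 * C₂) (2 * b * C₂ + (3 + b) * C₁) ≤
      3 * (b + 3) / (3 * b ^ 2 - 2 * b + 3) * ((1 - b) * C₁ + b * C₂) := by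
  have hD := three_mul_sq_sub_two_mul_add_three_pos b
  have hweights : (3 * b ^ 2 + b) / (3 * b ^ 2 - 2 * b + 3) +
      3 * (1 - b) / (3 * b ^ 2 - 2 * b + 3) = 1 := by
    rw [← add_div, div_eq_one_iff_eq hD.ne']
    ring
  calc min (3 * C₂) (2 * b * C₂ + (3 + b) * C₁)
      ≤ ((3 * b ^ 2 + b) / (3 * b ^ 2 - 2 * b + 3)) • (3 * C₂) +
          (3 * (1 - b) / (3 * b ^ 2 - 2 * b + 3)) • (2 * b * C₂ + (3 + b) * C₁) :=
        Convex.min_le_combo _ _ (by positivity) (div_nonneg (by linarith) hD.le) hweights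
    _ = 3 * (b + 3) / (3 * b ^ 2 - 2 * b + 3) * ((1 - b) * C₁ + b * C₂) := by
        simp only [smul_eq_mul]
        field_simp
        ring

lemma sub_eq_mul_sq_sub_two_mul_sqrt_three_sub_three (b : ℝ) :
    (5 + 3 * √3) * (3 * b ^ 2 - 2 * b + 3) - 8 * (b + 3) =
      3 * (5 + 3 * √3) * (b - (2 * √3 - 3)) ^ 2 := by
  linear_combination (36 * b + 48 - 36 * √3) * sq_sqrt (show (0 : ℝ) ≤ 3 by norm_num)

theorem div_three_mul_sq_sub_two_mul_add_three_le (b : ℝ) :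
    3 * (b + 3) / (3 * b ^ 2 - 2 * b + 3) ≤ 3 / 8 * (5 + 3 * √3) := by
  rw [div_le_iff₀ (three_mul_sq_sub_two_mul_add_three_pos b)]
  have hsq : 0 ≤ 3 * (5 + 3 * √3) * (b - (2 * √3 - 3)) ^ 2 := by positivity
  linarith [sub_eq_mul_sq_sub_two_mul_sqrt_three_sub_three b]

lemma three_div_eight_mul_five_add_three_mul_sqrt_three_le : 3 / 8 * (5 + 3 * √3) ≤ 3.83 := by
  have : √3 ≤ 1.7321 := sqrt_le_iff.2 ⟨by norm_num, by norm_num⟩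
  linarith

theorem stmt_3 (C₁ C₂ a b : ℝ) (hC₁ : 0 ≤ C₁) (hC₂ : 0 ≤ C₂)
    (ha : 0 ≤ a) (hb : 0 ≤ b) (hab : a + b = 1) :
    min (3 * C₂) (2 * b * C₂ + (3 + b) * C₁) ≤
      (3 * (b + 3) / (3 * b ^ 2 - 2 * b + 3)) * (a * C₁ + b * C₂) ∧
    (3 * (b + 3) / (3 * b ^ 2 - 2 * b + 3)) * (a * C₁ + b * C₂) ≤
      (3 / 8) * (5 + 3 * Real.sqrt 3) * (a * C₁ + b * C₂) ∧
    (3 / 8) * (5 + 3 * Real.sqrt 3) * (a * C₁ + b * C₂) ≤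
      3.83 * (a * C₁ + b * C₂) := by
  have hcombo : 0 ≤ a * C₁ + b * C₂ := by positivity
  obtain rfl : a = 1 - b := eq_sub_of_add_eq hab
  exact ⟨min_le_div_mul_convex_combo C₁ C₂ b hb (by linarith),
    mul_le_mul_of_nonneg_right (div_three_mul_sq_sub_two_mul_add_three_le b) hcombo,
    mul_le_mul_of_nonneg_right three_div_eight_mul_five_add_three_mul_sqrt_three_le hcombo⟩
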